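/- Let δ > 0, α ∈ (1/2, 1), κ > 0, ρ > 0, and ω the peridynamic dispersion relation. Then lim_{ξ → +∞} ξ^{2-α} ω''(ξ) = −(2α(1-α)√κ/√ρ) ( ∫_0^{+∞} (1 - cos τ)/τ^{1+2α} dτ )^{1/2}. In particular ω is concave at infinity. -/

import Mathlib

open MeasureTheory Filter

/-- The peridynamic dispersion relation. -/
noncomputable def omega (κ ρ δ α ξ : ℝ) : ℝ :=
  Real.sqrt ((2 * κ / (ρ * δ ^ (2 * α))) *
    ∫ z in (-1 : ℝ)..1, (1 - Real.cos (ξ * δ * z)) / |z| ^ (1 + 2 * α))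

noncomputable def pf (α τ : ℝ) : ℝ := (1 - Real.cos τ) / τ ^ (1 + 2 * α)
noncomputable def pF (α s : ℝ) : ℝ := ∫ τ in (0:ℝ)..s, pf α τ

open Set

variable {α : ℝ} (hα : 1/2 < α) (hα1 : α < 1)

lemma pf_nonneg {τ : ℝ} (hτ : 0 ≤ τ) : 0 ≤ pf α τ :=
  div_nonneg (by simp [Real.cos_le_one]) (Real.rpow_nonneg hτ _)

lemma pf_le_small {τ : ℝ} (hτ : 0 < τ) : pf α τ ≤ τ ^ (1 - 2*α) / 2 := by
  have h1 : 1 - Real.cos τ ≤ τ^2 / 2 := by nlinarith [Real.one_sub_sq_div_two_le_cos (x := τ)]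
  have h2 : (0:ℝ) < τ ^ (1 + 2*α) := Real.rpow_pos_of_pos hτ _
  rw [pf, div_le_iff₀ h2]
  calc 1 - Real.cos τ ≤ τ^2/2 := h1
    _ = τ ^ (1 - 2*α) / 2 * τ ^ (1 + 2*α) := by
        rw [div_mul_eq_mul_div, ← Real.rpow_add hτ]
        norm_num

lemma pf_le_tail {τ : ℝ} (hτ : 0 < τ) : pf α τ ≤ 2 * τ ^ (-(1 + 2*α)) := by
  have h2 : (0:ℝ) < τ ^ (1 + 2*α) := Real.rpow_pos_of_pos hτ _
  rw [pf, div_le_iff₀ h2, Real.rpow_neg hτ.le]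
  have : τ ^ (1 + 2*α) * (τ ^ (1+2*α))⁻¹ = 1 := mul_inv_cancel₀ h2.ne'
  nlinarith [Real.neg_one_le_cos τ]

lemma pf_continuousAt {τ : ℝ} (hτ : 0 < τ) : ContinuousAt (pf α) τ := by
  apply ContinuousAt.div
  · fun_prop
  · exact Real.continuousAt_rpow_const _ _ (Or.inl hτ.ne')
  · exact (Real.rpow_pos_of_pos hτ _).ne'

lemma pf_continuousOn : ContinuousOn (pf α) (Ioi 0) :=
  fun x hx => (pf_continuousAt hx).continuousWithinAt

lemma pf_aesm : AEStronglyMeasurable (pf α) (volume.restrict (Ioi 0)) :=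
  pf_continuousOn.aestronglyMeasurable measurableSet_Ioi

include hα1 in
lemma integrableOn_pf_Ioc : IntegrableOn (pf α) (Ioc 0 1) volume := by
  have hb : IntegrableOn (fun τ : ℝ => τ ^ (1 - 2*α) / 2) (Ioc 0 1) volume := by
    have := intervalIntegral.intervalIntegrable_rpow' (a := 0) (b := 1) (r := 1 - 2*α)
      (by linarith)
    rw [intervalIntegrable_iff_integrableOn_Ioc_of_le (by norm_num)] at this
    exact this.div_const 2
  apply Integrable.mono' hb (pf_aesm.mono_set Ioc_subset_Ioi_self)
  · filter_upwards [ae_restrict_mem measurableSet_Ioc] with τ hτ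
    rw [Real.norm_of_nonneg (pf_nonneg hτ.1.le)]
    exact pf_le_small hτ.1

include hα in
lemma integrableOn_pf_Ioi_one : IntegrableOn (pf α) (Ioi 1) volume := by
  have hb : IntegrableOn (fun τ : ℝ => 2 * τ ^ (-(1 + 2*α))) (Ioi 1) volume :=
    (integrableOn_Ioi_rpow_of_lt (by linarith) one_pos).const_mul 2
  apply Integrable.mono' hb (pf_aesm.mono_set (Ioi_subset_Ioi zero_le_one))
  · filter_upwards [ae_restrict_mem measurableSet_Ioi] with τ hτ
    have hτ0 : (0:ℝ) < τ := lt_trans one_pos hτ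
    rw [Real.norm_of_nonneg (pf_nonneg hτ0.le)]
    exact pf_le_tail hτ0

include hα hα1 in
lemma integrableOn_pf : IntegrableOn (pf α) (Ioi 0) volume := by
  rw [show Ioi (0:ℝ) = Ioc 0 1 ∪ Ioi 1 from (Ioc_union_Ioi_eq_Ioi zero_le_one).symm]
  exact (integrableOn_pf_Ioc hα1).union (integrableOn_pf_Ioi_one hα)

include hα hα1 in
lemma intervalIntegrable_pf {a b : ℝ} (ha : 0 ≤ a) (hb : 0 ≤ b) :
    IntervalIntegrable (pf α) volume a b := by
  rw [intervalIntegrable_iff]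
  exact (integrableOn_pf hα hα1).mono_set (fun x hx => by
    rcases hx with ⟨h1, h2⟩
    exact lt_of_le_of_lt (le_min ha hb) h1)

include hα hα1 in
lemma pF_hasDerivAt {s : ℝ} (hs : 0 < s) : HasDerivAt (pF α) (pf α s) s := by
  apply intervalIntegral.integral_hasDerivAt_right (intervalIntegrable_pf hα hα1 le_rfl hs.le)
  · exact pf_continuousOn.stronglyMeasurableAtFilter isOpen_Ioi s hs
  · exact pf_continuousAt hs

include hα hα1 in
lemma pF_pos {s : ℝ} (hs : 1 ≤ s) : 0 < pF α s := by
  have h1 : 0 < ∫ τ in (0:ℝ)..1, pf α τ := by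
    apply intervalIntegral.intervalIntegral_pos_of_pos_on
      (intervalIntegrable_pf hα hα1 le_rfl zero_le_one)
    · intro x hx
      apply div_pos
      · have hne : Real.cos x ≠ 1 := by
          intro h
          rw [Real.cos_eq_one_iff_of_lt_of_lt (x := x)
            (by nlinarith [Real.pi_gt_three, hx.1, hx.2])
            (by nlinarith [Real.pi_gt_three, hx.1, hx.2])] at h
          exact hx.1.ne' h
        have := Real.cos_le_one x
        cases lt_or_eq_of_le this with
        | inl h => linarith
        | inr h => exact absurd h hne
      · exact Real.rpow_pos_of_pos hx.1 _
    · norm_num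
  have h2 : 0 ≤ ∫ τ in (1:ℝ)..s, pf α τ := by
    apply intervalIntegral.integral_nonneg hs
    intro u hu; exact pf_nonneg (le_trans zero_le_one hu.1)
  have := intervalIntegral.integral_add_adjacent_intervals
    (intervalIntegrable_pf hα hα1 le_rfl zero_le_one)
    (intervalIntegrable_pf hα hα1 zero_le_one (le_trans zero_le_one hs))
  rw [pF, ← this]
  linarith

include hα hα1 in
lemma tendsto_pF : Tendsto (pF α) atTop
    (nhds (∫ τ in Ioi (0:ℝ), pf α τ)) :=
  intervalIntegral_tendsto_integral_Ioi 0 (integrableOn_pf hα hα1) tendsto_id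

/-- integrand of omega -/
noncomputable def pq (α s z : ℝ) : ℝ := (1 - Real.cos (s * z)) / |z| ^ (1 + 2 * α)

lemma pq_eq_on_Ioc {s : ℝ} (hs : 0 < s) {z : ℝ} (hz : z ∈ Ioc (0:ℝ) 1) :
    pq α s z = s ^ (1 + 2*α) * pf α (s * z) := by
  rw [pq, pf, abs_of_pos hz.1, Real.mul_rpow hs.le hz.1.le]
  have h1 : (0:ℝ) < s ^ (1 + 2*α) := Real.rpow_pos_of_pos hs _
  have h2 : (0:ℝ) < z ^ (1 + 2*α) := Real.rpow_pos_of_pos hz.1 _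
  field_simp

include hα hα1 in
lemma pq_intable {s : ℝ} (hs : 0 < s) :
    IntervalIntegrable (pq α s) volume 0 1 := by
  have h1 : IntervalIntegrable (fun z => s ^ (1+2*α) * pf α (s * z)) volume 0 1 := by
    have := ((intervalIntegrable_pf hα hα1 le_rfl hs.le).comp_mul_left (c := s)).const_mul
      (s ^ (1+2*α))
    simpa [hs.ne'] using this
  rw [intervalIntegrable_iff_integrableOn_Ioc_of_le zero_le_one] at h1 ⊢
  exact h1.congr_fun (fun z hz => (pq_eq_on_Ioc hs hz).symm) measurableSet_Ioc

include hα hα1 in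
lemma integral_pq_right {s : ℝ} (hs : 0 < s) :
    ∫ z in (0:ℝ)..1, pq α s z = s ^ (2*α) * pF α s := by
  rw [intervalIntegral.integral_congr (g := fun z => s ^ (1+2*α) * pf α (s * z)) ?_]
  · rw [intervalIntegral.integral_const_mul, intervalIntegral.integral_comp_mul_left _ hs.ne',
      mul_one, mul_zero]
    rw [smul_eq_mul, ← mul_assoc, pF]
    congr 1
    rw [← Real.rpow_neg_one s, ← Real.rpow_add hs]
    ring_nf
  · intro z hz
    rw [uIcc_of_le zero_le_one] at hz
    rcases eq_or_lt_of_le hz.1 with h | h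
    · simp [pq, pf, ← h]
    · exact pq_eq_on_Ioc hs ⟨h, hz.2⟩

include hα hα1 in
lemma integral_pq {s : ℝ} (hs : 0 < s) :
    ∫ z in (-1:ℝ)..1, pq α s z = 2 * (s ^ (2*α) * pF α s) := by
  have heven : (fun x => pq α s (-x)) = pq α s := by
    funext x
    simp [pq, mul_neg, Real.cos_neg]
  have hint : IntervalIntegrable (pq α s) volume (-1) 0 := by
    have h2 : IntervalIntegrable (fun x => pq α s (-x)) volume (-0) (-1) :=
      (IntervalIntegrable.iff_comp_neg).mp (pq_intable hα hα1 hs)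
    rw [heven] at h2
    simpa using h2.symm
  have hneg : ∫ z in (-1:ℝ)..0, pq α s z = ∫ z in (0:ℝ)..1, pq α s z := by
    have := intervalIntegral.integral_comp_neg (a := (0:ℝ)) (b := 1) (fun z => pq α s z)
    rw [heven] at this
    simp only [neg_zero] at this
    exact this.symm
  rw [← intervalIntegral.integral_add_adjacent_intervals hint (pq_intable hα hα1 hs),
    hneg, integral_pq_right hα hα1 hs]
  ring

include hα hα1 in
lemma omega_eq {κ ρ δ ξ : ℝ} (hκ : 0 < κ) (hρ : 0 < ρ) (hδ : 0 < δ) (hξ : 0 < ξ) :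
    omega κ ρ δ α ξ = Real.sqrt (4*κ/ρ) * ξ ^ α * Real.sqrt (pF α (ξ*δ)) := by
  have hs : 0 < ξ * δ := mul_pos hξ hδ
  rw [omega]
  have h := integral_pq hα hα1 hs
  simp only [pq] at h
  rw [h, Real.mul_rpow hξ.le hδ.le]
  have hδp : (0:ℝ) < δ ^ (2*α) := Real.rpow_pos_of_pos hδ _
  have heq : 2 * κ / (ρ * δ ^ (2*α)) * (2 * (ξ ^ (2*α) * δ ^ (2*α) * pF α (ξ*δ)))
      = (4*κ/ρ) * (ξ ^ (2*α) * pF α (ξ*δ)) := by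
    field_simp
    ring
  rw [heq, Real.sqrt_mul (by positivity), Real.sqrt_mul (by positivity), ← mul_assoc]
  congr 1
  congr 1
  rw [Real.sqrt_eq_rpow, ← Real.rpow_mul hξ.le]
  ring_nf

noncomputable def pW (α δ ξ : ℝ) : ℝ := Real.sqrt (pF α (ξ * δ))
noncomputable def pf' (α s : ℝ) : ℝ :=
  (Real.sin s * s ^ (1+2*α) - (1 - Real.cos s) * ((1+2*α) * s ^ (1+2*α-1))) / (s ^ (1+2*α)) ^ 2
noncomputable def pN (α δ ξ : ℝ) : ℝ := δ * pf α (ξ * δ)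
noncomputable def pN' (α δ ξ : ℝ) : ℝ := δ * (pf' α (ξ * δ) * δ)
noncomputable def GG (c α δ ξ : ℝ) : ℝ := c * ξ ^ α * pW α δ ξ
noncomputable def GG' (c α δ ξ : ℝ) : ℝ :=
  c * α * (ξ ^ (α-1) * pW α δ ξ) + c * (ξ ^ α * (pN α δ ξ / (2 * pW α δ ξ)))
noncomputable def GG'' (c α δ ξ : ℝ) : ℝ :=
  c * α * ((α-1) * ξ ^ (α-2) * pW α δ ξ + ξ ^ (α-1) * (pN α δ ξ / (2 * pW α δ ξ)))
  + c * (α * ξ ^ (α-1) * (pN α δ ξ / (2 * pW α δ ξ))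
      + ξ ^ α * ((pN' α δ ξ * (2 * pW α δ ξ) - pN α δ ξ * (2 * (pN α δ ξ / (2 * pW α δ ξ))))
          / (2 * pW α δ ξ) ^ 2))

lemma pf'_hasDerivAt {s : ℝ} (hs : 0 < s) : HasDerivAt (pf α) (pf' α s) s := by
  have hu : HasDerivAt (fun s => 1 - Real.cos s) (Real.sin s) s := by
    simpa using (Real.hasDerivAt_cos s).const_sub 1
  have hv : HasDerivAt (fun s : ℝ => s ^ (1+2*α)) ((1+2*α) * s ^ (1+2*α-1)) s :=
    Real.hasDerivAt_rpow_const (Or.inl hs.ne')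
  have := hu.div hv (Real.rpow_pos_of_pos hs _).ne'
  exact this

include hα hα1 in
lemma pW_hasDerivAt {δ ξ : ℝ} (hδ : 0 < δ) (hξ : 1 ≤ ξ * δ) :
    HasDerivAt (pW α δ) (pN α δ ξ / (2 * pW α δ ξ)) ξ := by
  have hs : 0 < ξ * δ := lt_of_lt_of_le one_pos hξ
  have hF := (pF_hasDerivAt hα hα1 hs).comp ξ (hasDerivAt_mul_const δ)
  have hne : pF α (ξ * δ) ≠ 0 := (pF_pos hα hα1 hξ).ne'
  have := hF.sqrt hne
  convert this using 1
  · rfl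
  simp only [Function.comp_apply, pN, pW]
  ring

include hα hα1 in
lemma GG_hasDerivAt {c δ ξ : ℝ} (hδ : 0 < δ) (hξ0 : 0 < ξ) (hξ : 1 ≤ ξ * δ) :
    HasDerivAt (GG c α δ) (GG' c α δ ξ) ξ := by
  have h1 : HasDerivAt (fun ξ : ℝ => c * ξ ^ α) (c * (α * ξ ^ (α-1))) ξ :=
    (Real.hasDerivAt_rpow_const (Or.inl hξ0.ne')).const_mul c
  have := h1.mul (pW_hasDerivAt hα hα1 hδ hξ)
  refine this.congr_deriv ?_
  simp only [GG', GG]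
  ring

include hα hα1 in
lemma pN_hasDerivAt {δ ξ : ℝ} (hδ : 0 < δ) (hξ : 1 ≤ ξ * δ) :
    HasDerivAt (pN α δ) (pN' α δ ξ) ξ := by
  have hs : 0 < ξ * δ := lt_of_lt_of_le one_pos hξ
  exact ((pf'_hasDerivAt hs).comp ξ (hasDerivAt_mul_const δ)).const_mul δ

include hα hα1 in
lemma GG'_hasDerivAt {c δ ξ : ℝ} (hδ : 0 < δ) (hξ0 : 0 < ξ) (hξ : 1 ≤ ξ * δ) :
    HasDerivAt (GG' c α δ) (GG'' c α δ ξ) ξ := by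
  have hW := pW_hasDerivAt hα hα1 hδ hξ
  have hWpos : 0 < pW α δ ξ := Real.sqrt_pos.mpr (pF_pos hα hα1 hξ)
  have h1 : HasDerivAt (fun ξ : ℝ => ξ ^ (α-1)) ((α-1) * ξ ^ (α-1-1)) ξ :=
    Real.hasDerivAt_rpow_const (Or.inl hξ0.ne')
  have hA := ((h1.mul hW).const_mul (c * α))
  have hD : HasDerivAt (fun ξ => 2 * pW α δ ξ) (2 * (pN α δ ξ / (2 * pW α δ ξ))) ξ :=
    hW.const_mul 2
  have hQ := (pN_hasDerivAt hα hα1 hδ hξ).div hD (by positivity)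
  have hxa : HasDerivAt (fun ξ : ℝ => ξ ^ α) (α * ξ ^ (α-1)) ξ :=
    Real.hasDerivAt_rpow_const (Or.inl hξ0.ne')
  have hB := (hxa.mul hQ).const_mul c
  have := hA.add hB
  refine this.congr_deriv ?_
  simp only [GG'']
  rw [show α - 2 = α - 1 - 1 by ring]
  rfl

include hα hα1 in
lemma deriv2_omega_eq {κ ρ δ : ℝ} (hκ : 0 < κ) (hρ : 0 < ρ) (hδ : 0 < δ) {ξ : ℝ}
    (hξ : 1/δ < ξ) :
    deriv (deriv (omega κ ρ δ α)) ξ = GG'' (Real.sqrt (4*κ/ρ)) α δ ξ := by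
  set c := Real.sqrt (4*κ/ρ) with hc
  have hUopen : IsOpen (Ioi (1/δ)) := isOpen_Ioi
  have hmem : ∀ x ∈ Ioi (1/δ), 1 ≤ x * δ := fun x hx => by
    rw [mem_Ioi, div_lt_iff₀ hδ] at hx; linarith
  have hpos : ∀ x ∈ Ioi (1/δ), (0:ℝ) < x := fun x hx => lt_trans (by positivity) hx
  have step1 : EqOn (deriv (omega κ ρ δ α)) (GG' c α δ) (Ioi (1/δ)) := by
    intro x hx
    have hev : omega κ ρ δ α =ᶠ[nhds x] GG c α δ :=
      Filter.eventuallyEq_of_mem (hUopen.mem_nhds hx) (fun y hy => by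
        rw [omega_eq hα hα1 hκ hρ hδ (hpos y hy), GG, pW])
    rw [hev.deriv_eq, (GG_hasDerivAt hα hα1 hδ (hpos x hx) (hmem x hx)).deriv]
  have hev2 : deriv (omega κ ρ δ α) =ᶠ[nhds ξ] GG' c α δ :=
    Filter.eventuallyEq_of_mem (hUopen.mem_nhds hξ) step1
  rw [hev2.deriv_eq, (GG'_hasDerivAt hα hα1 hδ (hpos ξ hξ) (hmem ξ hξ)).deriv]

include hα in
lemma pf'_bound {s : ℝ} (hs : 1 ≤ s) : |pf' α s| ≤ (3+4*α) * s ^ (-(1+2*α)) := by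
  have hs0 : (0:ℝ) < s := lt_of_lt_of_le one_pos hs
  have hp : (0:ℝ) < 1+2*α := by linarith
  have hsp : (0:ℝ) < s ^ (1+2*α) := Real.rpow_pos_of_pos hs0 _
  have hnum : |Real.sin s * s ^ (1+2*α) - (1 - Real.cos s) * ((1+2*α) * s ^ (1+2*α-1))|
      ≤ (3+4*α) * s ^ (1+2*α) := by
    have h1 : |Real.sin s * s ^ (1+2*α)| ≤ s ^ (1+2*α) := by
      rw [abs_mul, abs_of_pos hsp]
      exact mul_le_of_le_one_left hsp.le (Real.abs_sin_le_one s)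
    have hmono : s ^ (1+2*α-1) ≤ s ^ (1+2*α) :=
      Real.rpow_le_rpow_of_exponent_le hs (by linarith)
    have hsp1 : (0:ℝ) < s ^ (1+2*α-1) := Real.rpow_pos_of_pos hs0 _
    have h2 : |(1 - Real.cos s) * ((1+2*α) * s ^ (1+2*α-1))| ≤ (2+4*α) * s ^ (1+2*α) := by
      rw [abs_mul]
      have hc : |1 - Real.cos s| ≤ 2 := by
        have := Real.neg_one_le_cos s; have := Real.cos_le_one s
        rw [abs_le]; constructor <;> linarith
      have : |(1+2*α) * s ^ (1+2*α-1)| = (1+2*α) * s ^ (1+2*α-1) := by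
        rw [abs_of_pos (by positivity)]
      rw [this]
      calc |1 - Real.cos s| * ((1+2*α) * s ^ (1+2*α-1))
          ≤ 2 * ((1+2*α) * s ^ (1+2*α)) := by
            apply mul_le_mul hc (by nlinarith) (by positivity) (by norm_num)
        _ = (2+4*α) * s ^ (1+2*α) := by ring
    calc |Real.sin s * s ^ (1+2*α) - (1 - Real.cos s) * ((1+2*α) * s ^ (1+2*α-1))|
        ≤ |Real.sin s * s ^ (1+2*α)| + |(1 - Real.cos s) * ((1+2*α) * s ^ (1+2*α-1))| :=
          abs_sub _ _
      _ ≤ s ^ (1+2*α) + (2+4*α) * s ^ (1+2*α) := add_le_add h1 h2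
      _ = (3+4*α) * s ^ (1+2*α) := by ring
  rw [pf', abs_div, abs_of_pos (by positivity : (0:ℝ) < (s ^ (1+2*α))^2)]
  rw [div_le_iff₀ (by positivity)]
  calc |Real.sin s * s ^ (1+2*α) - (1 - Real.cos s) * ((1+2*α) * s ^ (1+2*α-1))|
      ≤ (3+4*α) * s ^ (1+2*α) := hnum
    _ = (3+4*α) * s ^ (-(1+2*α)) * (s ^ (1+2*α))^2 := by
        rw [sq, ← Real.rpow_add hs0, mul_assoc, ← Real.rpow_add hs0]
        ring_nf

lemma tendsto_mul_delta {δ : ℝ} (hδ : 0 < δ) :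
    Tendsto (fun ξ : ℝ => ξ * δ) atTop atTop :=
  Tendsto.atTop_mul_const hδ tendsto_id

include hα hα1 in
lemma pW_tendsto {δ : ℝ} (hδ : 0 < δ) :
    Tendsto (pW α δ) atTop (nhds (Real.sqrt (∫ τ in Ioi (0:ℝ), pf α τ))) := by
  have h1 : Tendsto (fun ξ : ℝ => pF α (ξ * δ)) atTop
      (nhds (∫ τ in Ioi (0:ℝ), pf α τ)) :=
    (tendsto_pF hα hα1).comp (tendsto_mul_delta hδ)
  exact (Real.continuous_sqrt.tendsto _).comp h1

include hα in
lemma pN_tendsto {δ : ℝ} (hδ : 0 < δ) :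
    Tendsto (fun ξ => ξ * pN α δ ξ) atTop (nhds 0) := by
  apply squeeze_zero_norm' (a := fun ξ : ℝ => 2 * (ξ * δ) ^ (-(2*α)))
  · filter_upwards [eventually_ge_atTop (max (1/δ) 1)] with ξ hξ
    have hξ1 : (1:ℝ) ≤ ξ := le_trans (le_max_right _ _) hξ
    have hξ0 : (0:ℝ) < ξ := lt_of_lt_of_le one_pos hξ1
    have hs1 : (1:ℝ) ≤ ξ * δ := by
      rw [← div_le_iff₀ hδ]; exact le_trans (le_max_left _ _) hξ
    have hs0 : (0:ℝ) < ξ * δ := lt_of_lt_of_le one_pos hs1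
    have hb := pf_le_tail (α := α) hs0
    rw [Real.norm_of_nonneg (by
      exact mul_nonneg hξ0.le (mul_nonneg hδ.le (pf_nonneg hs0.le)))]
    calc ξ * pN α δ ξ = (ξ * δ) * pf α (ξ * δ) := by rw [pN]; ring
      _ ≤ (ξ * δ) * (2 * (ξ * δ) ^ (-(1+2*α))) := by
          exact mul_le_mul_of_nonneg_left hb hs0.le
      _ = 2 * (ξ * δ) ^ (-(2*α)) := by
          rw [show (ξ*δ) * (2 * (ξ*δ) ^ (-(1+2*α))) = 2 * ((ξ*δ)^(1:ℝ) * (ξ*δ) ^ (-(1+2*α)))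
            by rw [Real.rpow_one]; ring, ← Real.rpow_add hs0]
          norm_num
  · have h0 : Tendsto (fun s : ℝ => s ^ (-(2*α))) atTop (nhds 0) :=
      tendsto_rpow_neg_atTop (by linarith)
    have := (h0.comp (tendsto_mul_delta hδ)).const_mul 2
    simpa using this

include hα in
lemma pN'_tendsto {δ : ℝ} (hδ : 0 < δ) :
    Tendsto (fun ξ => ξ^2 * pN' α δ ξ) atTop (nhds 0) := by
  apply squeeze_zero_norm'
    (a := fun ξ : ℝ => ((3+4*α) * δ^2 * δ^(-(1+2*α))) * ξ ^ (-(2*α-1)))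
  · filter_upwards [eventually_ge_atTop (max (1/δ) 1)] with ξ hξ
    have hξ1 : (1:ℝ) ≤ ξ := le_trans (le_max_right _ _) hξ
    have hξ0 : (0:ℝ) < ξ := lt_of_lt_of_le one_pos hξ1
    have hs1 : (1:ℝ) ≤ ξ * δ := by
      rw [← div_le_iff₀ hδ]; exact le_trans (le_max_left _ _) hξ
    have hs0 : (0:ℝ) < ξ * δ := lt_of_lt_of_le one_pos hs1
    have hb := pf'_bound hα hs1
    rw [pN']
    calc ‖ξ^2 * (δ * (pf' α (ξ * δ) * δ))‖ = ξ^2 * δ^2 * |pf' α (ξ*δ)| := by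
          rw [Real.norm_eq_abs, abs_mul, abs_mul, abs_mul, abs_of_nonneg (sq_nonneg ξ),
            abs_of_nonneg hδ.le]
          ring
      _ ≤ ξ^2 * δ^2 * ((3+4*α) * (ξ*δ) ^ (-(1+2*α))) := by
          apply mul_le_mul_of_nonneg_left hb (by positivity)
      _ = ((3+4*α) * δ^2 * δ^(-(1+2*α))) * (ξ^(2:ℝ) * ξ ^ (-(1+2*α))) := by
          rw [Real.mul_rpow hξ0.le hδ.le, Real.rpow_two]
          ring
      _ = ((3+4*α) * δ^2 * δ^(-(1+2*α))) * ξ ^ (-(2*α-1)) := by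
          rw [← Real.rpow_add hξ0]
          congr 1
          ring
  · have h0 : Tendsto (fun s : ℝ => s ^ (-(2*α-1))) atTop (nhds 0) :=
      tendsto_rpow_neg_atTop (by linarith)
    simpa using h0.const_mul ((3+4*α) * δ^2 * δ^(-(1+2*α)))

include hα hα1 in
lemma pF_le_L {s : ℝ} (hs : 0 ≤ s) : pF α s ≤ ∫ τ in Ioi (0:ℝ), pf α τ := by
  rw [pF, intervalIntegral.integral_of_le hs]
  apply setIntegral_mono_set (integrableOn_pf hα hα1)
  · filter_upwards [ae_restrict_mem measurableSet_Ioi] with x hx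
    exact pf_nonneg (le_of_lt hx)
  · exact HasSubset.Subset.eventuallyLE Ioc_subset_Ioi_self

include hα hα1 in
lemma L_pos : 0 < ∫ τ in Ioi (0:ℝ), pf α τ :=
  lt_of_lt_of_le (pF_pos hα hα1 le_rfl) (pF_le_L hα hα1 zero_le_one)

theorem second_deriv_omega_asymptotic_infty (κ ρ δ α : ℝ) (hκ : 0 < κ)
    (hρ : 0 < ρ) (hδ : 0 < δ) (hα : 1 / 2 < α) (hα1 : α < 1) :
    Tendsto (fun ξ : ℝ => ξ ^ (2 - α) * deriv (deriv (omega κ ρ δ α)) ξ) atTop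
      (nhds (-(2 * α * (1 - α) * Real.sqrt κ / Real.sqrt ρ) *
        Real.sqrt (∫ τ in Set.Ioi (0 : ℝ),
          (1 - Real.cos τ) / τ ^ (1 + 2 * α)))) := by
  set L := ∫ τ in Ioi (0:ℝ), pf α τ with hLdef
  set c := Real.sqrt (4*κ/ρ) with hc
  have hL0 : 0 < L := L_pos hα hα1
  have hsqL : 0 < Real.sqrt L := Real.sqrt_pos.mpr hL0
  set X := fun ξ : ℝ => ξ * pN α δ ξ with hX
  set Y := fun ξ : ℝ => ξ^2 * pN' α δ ξ with hY
  set W := pW α δ with hW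
  set E := fun ξ : ℝ => c*α*(X ξ/(2*W ξ)) + c*(α*(X ξ/(2*W ξ))
    + ((Y ξ*(2*W ξ)) - X ξ*(2*(X ξ/(2*W ξ))))/(2*W ξ)^2) with hE
  have hXlim : Tendsto X atTop (nhds 0) := pN_tendsto hα hδ
  have hYlim : Tendsto Y atTop (nhds 0) := pN'_tendsto hα hδ
  have hWlim : Tendsto W atTop (nhds (Real.sqrt L)) := pW_tendsto hα hα1 hδ
  have h2W : Tendsto (fun ξ => 2 * W ξ) atTop (nhds (2 * Real.sqrt L)) :=
    hWlim.const_mul 2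
  have h2Wne : (2 : ℝ) * Real.sqrt L ≠ 0 := by positivity
  have hQlim : Tendsto (fun ξ => X ξ/(2*W ξ)) atTop (nhds (0 / (2*Real.sqrt L))) :=
    hXlim.div h2W h2Wne
  have hElim : Tendsto E atTop (nhds 0) := by
    rw [hE]
    have h3 : Tendsto (fun ξ => ((Y ξ*(2*W ξ)) - X ξ*(2*(X ξ/(2*W ξ))))/(2*W ξ)^2)
        atTop (nhds ((0*(2*Real.sqrt L) - 0*(2*(0/(2*Real.sqrt L))))/(2*Real.sqrt L)^2)) := by
      apply Tendsto.div ((hYlim.mul h2W).sub (hXlim.mul (hQlim.const_mul 2))) (h2W.pow 2)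
      positivity
    have := ((hQlim.const_mul (c*α))).add (((hQlim.const_mul α).add h3).const_mul c)
    convert this using 2
    norm_num
  have hmain : Tendsto (fun ξ => c*α*(α-1) * W ξ + E ξ) atTop
      (nhds (c*α*(α-1) * Real.sqrt L + 0)) :=
    (hWlim.const_mul _).add hElim
  rw [add_zero] at hmain
  have hpfeq : (fun τ : ℝ => (1 - Real.cos τ) / τ ^ (1 + 2 * α)) = pf α := rfl
  have hconst : -(2 * α * (1 - α) * Real.sqrt κ / Real.sqrt ρ) *
      Real.sqrt (∫ τ in Set.Ioi (0 : ℝ), (1 - Real.cos τ) / τ ^ (1 + 2 * α))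
      = c*α*(α-1) * Real.sqrt L := by
    have h4 : c = 2 * Real.sqrt κ / Real.sqrt ρ := by
      rw [hc, Real.sqrt_div (by positivity) ρ, show (4:ℝ)*κ = 2^2*κ by ring,
        Real.sqrt_mul (by positivity) κ, Real.sqrt_sq (by norm_num)]
    have h5 : (∫ τ in Set.Ioi (0:ℝ), (1 - Real.cos τ) / τ ^ (1 + 2 * α)) = L := by
      rw [hLdef, hpfeq]
    rw [h4, h5]
    ring
  rw [hconst]
  apply Filter.Tendsto.congr' ?_ hmain
  filter_upwards [eventually_gt_atTop (max (1/δ) 0)] with ξ hξ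
  have hξδ : 1/δ < ξ := lt_of_le_of_lt (le_max_left _ _) hξ
  have hξ0 : 0 < ξ := lt_of_le_of_lt (le_max_right _ _) hξ
  rw [deriv2_omega_eq hα hα1 hκ hρ hδ hξδ]
  have e0 : ξ^(2-α)*ξ^(α-2) = 1 := by
    rw [← Real.rpow_add hξ0]; norm_num
  have e1 : ξ^(2-α)*ξ^(α-1) = ξ := by
    rw [← Real.rpow_add hξ0]; norm_num
  have e2 : ξ^(2-α)*ξ^(α:ℝ) = ξ^2 := by
    rw [← Real.rpow_add hξ0, ← Real.rpow_two]; norm_num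
  rw [GG'', hE, hX, hY, hW]
  linear_combination (-(c*α*(α-1)*pW α δ ξ)) * e0
    + (-(2*c*α*(pN α δ ξ/(2*pW α δ ξ)))) * e1
    + (-(c*((pN' α δ ξ*(2*pW α δ ξ) - pN α δ ξ*(2*(pN α δ ξ/(2*pW α δ ξ))))/(2*pW α δ ξ)^2))) * e2
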